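/- Let f be an L_p-nested function on ℝⁿ with normalization Z = S_f(1) (surface area of the unit f-sphere). Suppose x given (μ, τ) has density τⁿ ρ(f(τ(x−μ))) for some L_p-nested symmetric density ρ(f(·)) with radial density ϱ, and the prior is p(μ, τ) = p(μ)·c·τ^{−1} (Jeffreys prior on scale, independent of μ). Then the joint density satisfies p(x, μ) = ∫₀^∞ τⁿ ρ(f(τ(x−μ))) c τ^{−1} p(μ) dτ = f(x−μ)^{−n} · c · Z^{−1} · p(μ), independent of the choice of ϱ. -/

import Mathlib

open Real MeasureTheory

inductive LpTree : Type
  | leaf : LpTree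
  | node : ℝ → List LpTree → LpTree

namespace LpTree

mutual
/-- Number of leaves (= dimension) of an `L_p`-nested tree. -/
def numLeaves : LpTree → ℕ
  | leaf => 1
  | node _ cs => numLeavesList cs

def numLeavesList : List LpTree → ℕ
  | [] => 0
  | c :: cs => numLeaves c + numLeavesList cs
end

mutual
/-- Evaluation of an `L_p`-nested function on coordinates `x 0, x 1, ...`. -/
noncomputable def eval : LpTree → (ℕ → ℝ) → ℝ
  | .leaf, x => |x 0|
  | .node p cs, x => (evalSum p cs x) ^ (1 / p)

noncomputable def evalSum : ℝ → List LpTree → (ℕ → ℝ) → ℝ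
  | _, [], _ => 0
  | p, c :: cs, x => (eval c x) ^ p + evalSum p cs (fun i => x (i + c.numLeaves))
end

/-- Well-formedness: every inner node has a positive exponent and at least one child. -/
inductive WF : LpTree → Prop
  | leaf : WF .leaf
  | node (p : ℝ) (cs : List LpTree) (hp : 0 < p) (hcs : cs ≠ [])
      (h : ∀ c ∈ cs, WF c) : WF (.node p cs)

/-- The `L_p`-nested function as a function on `ℝⁿ`, `n = t.numLeaves`. -/
noncomputable def evalFin (t : LpTree) (x : Fin t.numLeaves → ℝ) : ℝ :=
  t.eval (fun i => if h : i < t.numLeaves then x ⟨i, h⟩ else 0)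

end LpTree

namespace LpTree

mutual
theorem eval_nonneg : ∀ (t : LpTree) (x : ℕ → ℝ), 0 ≤ t.eval x
  | .leaf, x => by simpa [eval] using abs_nonneg (x 0)
  | .node p cs, x => by
      simpa [eval] using Real.rpow_nonneg (evalSum_nonneg p cs x) (1 / p)

theorem evalSum_nonneg : ∀ (p : ℝ) (cs : List LpTree) (x : ℕ → ℝ), 0 ≤ evalSum p cs x
  | _, [], _ => by simp [evalSum]
  | p, c :: cs, x => by
      simpa [evalSum] using add_nonneg (Real.rpow_nonneg (eval_nonneg c x) p)
        (evalSum_nonneg p cs (fun i => x (i + c.numLeaves)))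
end

mutual
theorem eval_smul (τ : ℝ) (hτ : 0 ≤ τ) :
    ∀ (t : LpTree), t.WF → ∀ x : ℕ → ℝ, t.eval (fun i => τ * x i) = τ * t.eval x
  | .leaf, _, x => by simp [eval, abs_mul, abs_of_nonneg hτ]
  | .node p cs, hw, x => by
      cases hw with
      | node _ _ hp hcs hall =>
        rw [eval, eval, evalSum_smul τ hτ p hp cs hall x,
          Real.mul_rpow (Real.rpow_nonneg hτ p) (evalSum_nonneg p cs x),
          ← Real.rpow_mul hτ, mul_one_div_cancel hp.ne', Real.rpow_one]

theorem evalSum_smul (τ : ℝ) (hτ : 0 ≤ τ) :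
    ∀ (p : ℝ) (hp : 0 < p) (cs : List LpTree), (∀ c ∈ cs, WF c) →
      ∀ x : ℕ → ℝ, evalSum p cs (fun i => τ * x i) = τ ^ p * evalSum p cs x
  | p, _, [], _, x => by simp [evalSum]
  | p, hp, c :: cs, hall, x => by
      rw [evalSum, evalSum, eval_smul τ hτ c (hall c (by simp)) x,
        Real.mul_rpow hτ (eval_nonneg c x),
        evalSum_smul τ hτ p hp cs (fun d hd => hall d (by simp [hd])) (fun i => x (i + c.numLeaves)),
        mul_add]
end

theorem one_le_numLeaves : ∀ t : LpTree, t.WF → 1 ≤ t.numLeaves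
  | .leaf, _ => le_refl 1
  | .node p [], h => by cases h with | node _ _ hp hcs hall => exact absurd rfl hcs
  | .node p (c :: cs), h => by
      cases h with
      | node _ _ hp hcs hall =>
        have := one_le_numLeaves c (hall c (by simp))
        simp only [numLeaves, numLeavesList]
        omega

theorem evalFin_smul (t : LpTree) (ht : t.WF) (τ : ℝ) (hτ : 0 ≤ τ)
    (y : Fin t.numLeaves → ℝ) : t.evalFin (τ • y) = τ * t.evalFin y := by
  unfold evalFin
  rw [← eval_smul τ hτ t ht]
  congr 1
  funext i
  split <;> simp

end LpTree

/-- Robust Bayesian inference of the location for `L_p`-nested symmetric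
distributions: with likelihood `τⁿ ρ(f(τ(x−μ)))` where
`ρ(r) = ϱ(r)/(r^{n−1} Z)`, `Z = S_f(1)`, and the improper Jeffreys prior
`p(μ,τ) = p(μ)·c·τ⁻¹`, the joint density is
`p(x,μ) = f(x−μ)^{−n} · c · Z⁻¹ · p(μ)`, independently of `ϱ`. -/
theorem LpTree.robust_location_posterior (t : LpTree) (ht : t.WF)
    (ϱ : ℝ → ℝ) (hmeas : Measurable ϱ) (hnonneg : ∀ r, 0 ≤ ϱ r)
    (hsupp : ∀ r : ℝ, r ≤ 0 → ϱ r = 0) (hint : ∫ r : ℝ, ϱ r = 1)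
    (c pm : ℝ) (x μ : Fin t.numLeaves → ℝ) (hx : 0 < t.evalFin (x - μ)) :
    (∫ τ in Set.Ioi (0 : ℝ),
        τ ^ t.numLeaves *
            (ϱ (t.evalFin (τ • (x - μ))) /
              (t.evalFin (τ • (x - μ)) ^ (t.numLeaves - 1) *
                (t.numLeaves *
                  (volume {y : Fin t.numLeaves → ℝ | t.evalFin y ≤ 1}).toReal))) *
          (c * τ⁻¹) * pm) =
      t.evalFin (x - μ) ^ (-(t.numLeaves : ℝ)) * c *
        (t.numLeaves * (volume {y : Fin t.numLeaves → ℝ | t.evalFin y ≤ 1}).toReal)⁻¹ *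
        pm := by
  set f := t.evalFin (x - μ) with hf
  set Z : ℝ := t.numLeaves * (volume {y : Fin t.numLeaves → ℝ | t.evalFin y ≤ 1}).toReal
    with hZ
  have hn1 : 1 ≤ t.numLeaves := t.one_le_numLeaves ht
  have hf0 : f ≠ 0 := hx.ne'
  have key : ∀ τ ∈ Set.Ioi (0 : ℝ),
      τ ^ t.numLeaves * (ϱ (t.evalFin (τ • (x - μ))) /
          (t.evalFin (τ • (x - μ)) ^ (t.numLeaves - 1) * Z)) * (c * τ⁻¹) * pm
        = (c * pm / (f ^ (t.numLeaves - 1) * Z)) * ϱ (f * τ) := by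
    intro τ hτ
    rw [Set.mem_Ioi] at hτ
    have hτn : τ ^ t.numLeaves = τ ^ (t.numLeaves - 1) * τ := by
      conv_lhs => rw [show t.numLeaves = (t.numLeaves - 1) + 1 from by omega]
      rw [pow_succ]
    rw [t.evalFin_smul ht τ hτ.le, ← hf, mul_pow, hτn, mul_comm f τ]
    have hone : τ * τ ^ (t.numLeaves - 1) * τ⁻¹ * τ⁻¹ ^ (t.numLeaves - 1) = 1 := by
      have hττ : τ * τ⁻¹ = 1 := mul_inv_cancel₀ hτ.ne'
      calc τ * τ ^ (t.numLeaves - 1) * τ⁻¹ * τ⁻¹ ^ (t.numLeaves - 1)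
          = (τ * τ⁻¹) * (τ * τ⁻¹) ^ (t.numLeaves - 1) := by rw [mul_pow]; ring
        _ = 1 := by rw [hττ]; simp
    field_simp [hτ.ne']
  rw [setIntegral_congr_fun measurableSet_Ioi key, integral_const_mul _ _]
  have h2 : (∫ τ in Set.Ioi (0:ℝ), ϱ (f * τ)) = f⁻¹ * ∫ τ in Set.Ioi (f * 0), ϱ τ := by
    rw [integral_comp_mul_left_Ioi ϱ 0 hx, smul_eq_mul]
  rw [h2, mul_zero, setIntegral_eq_integral_of_forall_compl_eq_zero
      (fun r hr => hsupp r (by simpa using hr)), hint, mul_one]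
  have h3 : f ^ (-(t.numLeaves : ℝ)) = (f ^ t.numLeaves)⁻¹ := by
    rw [Real.rpow_neg hx.le, Real.rpow_natCast]
  have hfn : f ^ t.numLeaves = f ^ (t.numLeaves - 1) * f := by
    conv_lhs => rw [show t.numLeaves = (t.numLeaves - 1) + 1 from by omega]
    rw [pow_succ]
  rw [h3, hfn, div_eq_mul_inv, mul_inv, mul_inv]
  ring
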